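/- For the unit circle, with Q₀[F] = −(1/4)∂_θX_c·HF − (1/8π)∫_{𝕊¹} X_c(θ')·F(θ')dθ': for every n ≥ 2, Q₀[cos(nθ)X_c] = Q₀[sin(nθ)X_c] = 0, Q₀[cos(nθ)∂_θX_c] = −(1/4)sin(nθ), and Q₀[sin(nθ)∂_θX_c] = (1/4)cos(nθ); moreover Q₀[cosθ·X_c] = (1/8)cosθ, Q₀[sinθ·X_c] = (1/8)sinθ, Q₀[cosθ·∂_θX_c] = −(1/8)sinθ, Q₀[sinθ·∂_θX_c] = (1/8)cosθ, and Q₀[X_c] = Q₀[∂_θX_c] = 0. -/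

import Mathlib

open Real

noncomputable section

abbrev E2 := EuclideanSpace ℝ (Fin 2)

noncomputable def Xc (θ : ℝ) : E2 :=
  (WithLp.equiv 2 (Fin 2 → ℝ)).symm ![Real.cos θ, Real.sin θ]

noncomputable def dXc (θ : ℝ) : E2 :=
  (WithLp.equiv 2 (Fin 2 → ℝ)).symm ![-Real.sin θ, Real.cos θ]

/-- Componentwise periodic Hilbert transform (symmetrized p.v. integral). -/
noncomputable def HilV (F : ℝ → E2) (θ : ℝ) : E2 :=
  (1 / (2 * π)) • ∫ t in (0 : ℝ)..π, Real.cot (t / 2) • (F (θ - t) - F (θ + t))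

/-- The unit-circle operator `Q₀[F] = −(1/4)∂_θX_c·HF − (1/8π)∫ X_c(θ')·F(θ')dθ'`. -/
noncomputable def Q0 (F : ℝ → E2) (θ : ℝ) : ℝ :=
  -(1 / 4) * (inner ℝ (dXc θ) (HilV F θ) : ℝ)
    - (1 / (8 * π)) * ∫ φ in (0 : ℝ)..(2 * π), (inner ℝ (Xc φ) (F φ) : ℝ)

/-!
For `0 < t ≤ π`, `cot (t/2) * sin (k t) = ∑_{j<k} (cos (j t) + cos ((j+1) t))`, so
`∫₀^π cot (t/2) sin (k t) dt = π` for `k ≥ 1`; consequently `HilV F θ = (1/2) • ∑ v_k` whenever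
`F (θ - t) - F (θ + t) = ∑ sin (k t) • v_k` with all `k ≥ 1`.

By product-to-sum, `cos (nφ) • X_c φ` and its three companions are sums of rotating modes of
frequencies `n + 1` and `1 - n`. Their odd differences in `t` have that form, with vectors `± X_c`,
`± ∂_θX_c` at the angles `θ ± nθ`, so pairing with `∂_θX_c θ` leaves `± cos nθ` or `± sin nθ`.
For `n = 1` the second mode is constant and `HilV` only sees the first. The mean term
`∫ X_c · F` vanishes except for `F = X_c`, where it cancels the Hilbert part.
-/

open MeasureTheory Finset Set
open scoped Interval RealInnerProductSpace

lemma cot_half_mul_sin_add {t : ℝ} (ht : sin (t / 2) ≠ 0) (x : ℝ) :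
    cot (t / 2) * sin (x + t) = cot (t / 2) * sin x + cos x + cos (x + t) := by
  have h1 := sin_sub_sin (x + t) x
  have h2 := cos_add_cos (x + t) x
  rw [show (x + t - x) / 2 = t / 2 by ring] at h1 h2
  rw [cot_eq_cos_div_sin]
  field_simp
  linear_combination cos (t / 2) * h1 - sin (t / 2) * h2

lemma cot_half_mul_sin_nat_mul {t : ℝ} (ht : sin (t / 2) ≠ 0) (k : ℕ) :
    cot (t / 2) * sin (k * t) = ∑ j ∈ range k, (cos (j * t) + cos ((j + 1 : ℕ) * t)) := by
  induction k with
  | zero => simp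
  | succ k ih =>
    rw [sum_range_succ, ← ih, ← add_assoc, Nat.cast_succ, add_one_mul, cot_half_mul_sin_add ht]

lemma cot_half_mul_sin_eqOn (k : ℕ) :
    EqOn (fun t => cot (t / 2) * sin (k * t))
      (fun t => ∑ j ∈ range k, (cos (j * t) + cos ((j + 1 : ℕ) * t))) (Ι 0 π) := by
  intro t ht
  rw [uIoc_of_le pi_pos.le] at ht
  exact cot_half_mul_sin_nat_mul
    (sin_pos_of_pos_of_lt_pi (by linarith [ht.1]) (by linarith [ht.2, pi_pos])).ne' k

lemma intervalIntegrable_cot_half_mul_sin (k : ℕ) :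
    IntervalIntegrable (fun t => cot (t / 2) * sin (k * t)) volume 0 π :=
  (intervalIntegrable_congr (cot_half_mul_sin_eqOn k)).2 <| by
    apply Continuous.intervalIntegrable; fun_prop

lemma integral_cos_nat_mul_zero_pi (j : ℕ) :
    ∫ t in (0 : ℝ)..π, cos (j * t) = if j = 0 then π else 0 := by
  split_ifs with hj
  · simp [hj]
  · have hj' : (j : ℝ) ≠ 0 := Nat.cast_ne_zero.2 hj
    simp [intervalIntegral.integral_comp_mul_left (fun x => cos x) hj', sin_nat_mul_pi]

lemma integral_cot_half_mul_sin {k : ℕ} (hk : k ≠ 0) :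
    ∫ t in (0 : ℝ)..π, cot (t / 2) * sin (k * t) = π := by
  have hterm : ∀ j ∈ range k,
      ∫ t in (0 : ℝ)..π, (cos (j * t) + cos ((j + 1 : ℕ) * t)) = if j = 0 then π else 0 := by
    intro j _
    rw [intervalIntegral.integral_add (by apply Continuous.intervalIntegrable; fun_prop)
      (by apply Continuous.intervalIntegrable; fun_prop), integral_cos_nat_mul_zero_pi,
      integral_cos_nat_mul_zero_pi]
    simp
  rw [intervalIntegral.integral_congr_ae (ae_of_all _ fun t ht => cot_half_mul_sin_eqOn k ht),
    intervalIntegral.integral_finsetSum fun j _ => by apply Continuous.intervalIntegrable; fun_prop,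
    sum_congr rfl hterm]
  simp [Nat.pos_of_ne_zero hk]

lemma integral_cos_nat_mul_zero_two_pi {n : ℕ} (hn : n ≠ 0) :
    ∫ φ in (0 : ℝ)..2 * π, cos (n * φ) = 0 := by
  have hn' : (n : ℝ) ≠ 0 := Nat.cast_ne_zero.2 hn
  have h : sin (n * (2 * π)) = 0 := by
    rw [← mul_assoc]; exact_mod_cast sin_nat_mul_pi (n * 2)
  simp [intervalIntegral.integral_comp_mul_left (fun x => cos x) hn', h]

lemma integral_sin_nat_mul_zero_two_pi {n : ℕ} (hn : n ≠ 0) :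
    ∫ φ in (0 : ℝ)..2 * π, sin (n * φ) = 0 := by
  have hn' : (n : ℝ) ≠ 0 := Nat.cast_ne_zero.2 hn
  simp [intervalIntegral.integral_comp_mul_left (fun x => sin x) hn']

lemma integral_cot_half_smul_sin_smul {E : Type*} [NormedAddCommGroup E] [NormedSpace ℝ E]
    [CompleteSpace E] {k : ℕ} (hk : k ≠ 0) (v : E) :
    ∫ t in (0 : ℝ)..π, cot (t / 2) • sin (k * t) • v = π • v := by
  simp only [smul_smul]
  rw [intervalIntegral.integral_smul_const, integral_cot_half_mul_sin hk]

lemma HilV_eq_of_sub_eq {F : ℝ → E2} {θ : ℝ} {k : ℕ} (hk : k ≠ 0) {v : E2}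
    (hF : ∀ t, F (θ - t) - F (θ + t) = sin (k * t) • v) :
    HilV F θ = (1 / 2 : ℝ) • v := by
  rw [HilV, funext fun t => congrArg _ (hF t), integral_cot_half_smul_sin_smul hk, smul_smul]
  congr 1
  field_simp

lemma HilV_eq_of_sub_eq_add {F : ℝ → E2} {θ : ℝ} {k l : ℕ} (hk : k ≠ 0) (hl : l ≠ 0) {v w : E2}
    (hF : ∀ t, F (θ - t) - F (θ + t) = sin (k * t) • v + sin (l * t) • w) :
    HilV F θ = (1 / 2 : ℝ) • (v + w) := by
  have hint (m : ℕ) (u : E2) :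
      IntervalIntegrable (fun t => cot (t / 2) • sin (m * t) • u) volume 0 π := by
    simpa only [smul_smul] using
      (intervalIntegrable_cot_half_mul_sin m).smul_continuousOn continuousOn_const
  have hsplit (t : ℝ) : cot (t / 2) • (F (θ - t) - F (θ + t)) =
      cot (t / 2) • sin (k * t) • v + cot (t / 2) • sin (l * t) • w := by
    rw [hF, smul_add]
  rw [HilV, funext hsplit, intervalIntegral.integral_add (hint k v) (hint l w),
    integral_cot_half_smul_sin_smul hk, integral_cot_half_smul_sin_smul hl, ← smul_add, smul_smul]
  congr 1
  field_simp

lemma inner_toLp_fin_two (a b c d : ℝ) : ⟪!₂[a, b], !₂[c, d]⟫ = a * c + b * d := by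
  simp [EuclideanSpace.inner_toLp_toLp, dotProduct, Fin.sum_univ_two, mul_comm]

lemma inner_dXc_Xc (a b : ℝ) : ⟪dXc a, Xc b⟫ = sin (b - a) := by
  simp only [Xc, dXc, WithLp.equiv_symm_apply, inner_toLp_fin_two, sin_sub]; ring

lemma inner_dXc_dXc (a b : ℝ) : ⟪dXc a, dXc b⟫ = cos (b - a) := by
  simp only [dXc, WithLp.equiv_symm_apply, inner_toLp_fin_two, cos_sub]; ring

lemma inner_Xc_self (a : ℝ) : ⟪Xc a, Xc a⟫ = 1 := by
  simp only [Xc, WithLp.equiv_symm_apply, inner_toLp_fin_two]; rw [← sin_sq_add_cos_sq a]; ring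

lemma inner_Xc_dXc_self (a : ℝ) : ⟪Xc a, dXc a⟫ = 0 := by
  simp only [Xc, dXc, WithLp.equiv_symm_apply, inner_toLp_fin_two]; ring

lemma cos_mul_smul_Xc_sub (n θ t : ℝ) :
    cos (n * (θ - t)) • Xc (θ - t) - cos (n * (θ + t)) • Xc (θ + t) =
      sin ((n + 1) * t) • -dXc (θ + n * θ) + sin ((n - 1) * t) • dXc (θ - n * θ) := by
  ext i; fin_cases i <;>
  simp [Xc, dXc, mul_sub, mul_add, add_mul, sub_mul, sin_add, sin_sub, cos_add, cos_sub] <;> ring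

lemma sin_mul_smul_Xc_sub (n θ t : ℝ) :
    sin (n * (θ - t)) • Xc (θ - t) - sin (n * (θ + t)) • Xc (θ + t) =
      sin ((n + 1) * t) • -Xc (θ + n * θ) + sin ((n - 1) * t) • -Xc (θ - n * θ) := by
  ext i; fin_cases i <;>
  simp [Xc, mul_sub, mul_add, add_mul, sub_mul, sin_add, sin_sub, cos_add, cos_sub] <;> ring

lemma cos_mul_smul_dXc_sub (n θ t : ℝ) :
    cos (n * (θ - t)) • dXc (θ - t) - cos (n * (θ + t)) • dXc (θ + t) =
      sin ((n + 1) * t) • Xc (θ + n * θ) + sin ((n - 1) * t) • -Xc (θ - n * θ) := by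
  ext i; fin_cases i <;>
  simp [Xc, dXc, mul_sub, mul_add, add_mul, sub_mul, sin_add, sin_sub, cos_add, cos_sub] <;> ring

lemma sin_mul_smul_dXc_sub (n θ t : ℝ) :
    sin (n * (θ - t)) • dXc (θ - t) - sin (n * (θ + t)) • dXc (θ + t) =
      sin ((n + 1) * t) • -dXc (θ + n * θ) + sin ((n - 1) * t) • -dXc (θ - n * θ) := by
  ext i; fin_cases i <;>
  simp [dXc, mul_sub, mul_add, add_mul, sub_mul, sin_add, sin_sub, cos_add, cos_sub] <;> ring

lemma Xc_sub_Xc (a s : ℝ) : Xc (a - s) - Xc (a + s) = sin s • (-2 : ℝ) • dXc a := by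
  ext i; fin_cases i <;> simp [Xc, dXc, sin_add, sin_sub, cos_add, cos_sub] <;> ring

lemma dXc_sub_dXc (a s : ℝ) : dXc (a - s) - dXc (a + s) = sin s • (2 : ℝ) • Xc a := by
  ext i; fin_cases i <;> simp [Xc, dXc, sin_add, sin_sub, cos_add, cos_sub] <;> ring

lemma Q0_smul_Xc (f : ℝ → ℝ) (θ : ℝ) :
    Q0 (fun φ => f φ • Xc φ) θ =
      -(1 / 4) * ⟪dXc θ, HilV (fun φ => f φ • Xc φ) θ⟫
        - 1 / (8 * π) * ∫ φ in (0 : ℝ)..2 * π, f φ := by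
  simp only [Q0, real_inner_smul_right, inner_Xc_self, mul_one]

lemma Q0_smul_dXc (f : ℝ → ℝ) (θ : ℝ) :
    Q0 (fun φ => f φ • dXc φ) θ = -(1 / 4) * ⟪dXc θ, HilV (fun φ => f φ • dXc φ) θ⟫ := by
  simp [Q0, real_inner_smul_right, inner_Xc_dXc_self]

theorem Q0_cos_mul_smul_Xc {n : ℕ} (hn : 2 ≤ n) (θ : ℝ) :
    Q0 (fun φ => cos (n * φ) • Xc φ) θ = 0 := by
  rw [Q0_smul_Xc, integral_cos_nat_mul_zero_two_pi (by omega),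
    HilV_eq_of_sub_eq_add (k := n + 1) (l := n - 1) (by omega) (by omega) fun t => by
      rw [Nat.cast_succ, Nat.cast_pred (by omega)]; exact cos_mul_smul_Xc_sub n θ t]
  simp only [inner_smul_right, inner_add_right, inner_neg_right, inner_dXc_dXc,
    add_sub_cancel_left, sub_sub_cancel_left, cos_neg]
  ring

theorem Q0_sin_mul_smul_Xc {n : ℕ} (hn : 2 ≤ n) (θ : ℝ) :
    Q0 (fun φ => sin (n * φ) • Xc φ) θ = 0 := by
  rw [Q0_smul_Xc, integral_sin_nat_mul_zero_two_pi (by omega),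
    HilV_eq_of_sub_eq_add (k := n + 1) (l := n - 1) (by omega) (by omega) fun t => by
      rw [Nat.cast_succ, Nat.cast_pred (by omega)]; exact sin_mul_smul_Xc_sub n θ t]
  simp only [inner_smul_right, inner_add_right, inner_neg_right, inner_dXc_Xc,
    add_sub_cancel_left, sub_sub_cancel_left, sin_neg]
  ring

theorem Q0_cos_mul_smul_dXc {n : ℕ} (hn : 2 ≤ n) (θ : ℝ) :
    Q0 (fun φ => cos (n * φ) • dXc φ) θ = -(1 / 4) * sin (n * θ) := by
  rw [Q0_smul_dXc,
    HilV_eq_of_sub_eq_add (k := n + 1) (l := n - 1) (by omega) (by omega) fun t => by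
      rw [Nat.cast_succ, Nat.cast_pred (by omega)]; exact cos_mul_smul_dXc_sub n θ t]
  simp only [inner_smul_right, inner_add_right, inner_neg_right, inner_dXc_Xc,
    add_sub_cancel_left, sub_sub_cancel_left, sin_neg]
  ring

theorem Q0_sin_mul_smul_dXc {n : ℕ} (hn : 2 ≤ n) (θ : ℝ) :
    Q0 (fun φ => sin (n * φ) • dXc φ) θ = (1 / 4) * cos (n * θ) := by
  rw [Q0_smul_dXc,
    HilV_eq_of_sub_eq_add (k := n + 1) (l := n - 1) (by omega) (by omega) fun t => by
      rw [Nat.cast_succ, Nat.cast_pred (by omega)]; exact sin_mul_smul_dXc_sub n θ t]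
  simp only [inner_smul_right, inner_add_right, inner_neg_right, inner_dXc_dXc,
    add_sub_cancel_left, sub_sub_cancel_left, cos_neg]
  ring

theorem Q0_cos_smul_Xc (θ : ℝ) : Q0 (fun φ => cos φ • Xc φ) θ = (1 / 8) * cos θ := by
  rw [Q0_smul_Xc, integral_cos, HilV_eq_of_sub_eq (k := 2) two_ne_zero fun t => by
    simpa only [one_mul, sub_self, zero_mul, sin_zero, zero_smul, add_zero, one_add_one_eq_two,
      Nat.cast_ofNat] using cos_mul_smul_Xc_sub 1 θ t]
  simp only [inner_smul_right, inner_neg_right, inner_dXc_dXc, add_sub_cancel_right, sin_two_pi,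
    sin_zero]
  ring

theorem Q0_sin_smul_Xc (θ : ℝ) : Q0 (fun φ => sin φ • Xc φ) θ = (1 / 8) * sin θ := by
  rw [Q0_smul_Xc, integral_sin, HilV_eq_of_sub_eq (k := 2) two_ne_zero fun t => by
    simpa only [one_mul, sub_self, zero_mul, sin_zero, zero_smul, add_zero, one_add_one_eq_two,
      Nat.cast_ofNat] using sin_mul_smul_Xc_sub 1 θ t]
  simp only [inner_smul_right, inner_neg_right, inner_dXc_Xc, add_sub_cancel_right, cos_two_pi,
    cos_zero]
  ring

theorem Q0_cos_smul_dXc (θ : ℝ) : Q0 (fun φ => cos φ • dXc φ) θ = -(1 / 8) * sin θ := by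
  rw [Q0_smul_dXc, HilV_eq_of_sub_eq (k := 2) two_ne_zero fun t => by
    simpa only [one_mul, sub_self, zero_mul, sin_zero, zero_smul, add_zero, one_add_one_eq_two,
      Nat.cast_ofNat] using cos_mul_smul_dXc_sub 1 θ t]
  simp only [inner_smul_right, inner_dXc_Xc, add_sub_cancel_right]
  ring

theorem Q0_sin_smul_dXc (θ : ℝ) : Q0 (fun φ => sin φ • dXc φ) θ = (1 / 8) * cos θ := by
  rw [Q0_smul_dXc, HilV_eq_of_sub_eq (k := 2) two_ne_zero fun t => by
    simpa only [one_mul, sub_self, zero_mul, sin_zero, zero_smul, add_zero, one_add_one_eq_two,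
      Nat.cast_ofNat] using sin_mul_smul_dXc_sub 1 θ t]
  simp only [inner_smul_right, inner_neg_right, inner_dXc_dXc, add_sub_cancel_right]
  ring

theorem Q0_Xc (θ : ℝ) : Q0 Xc θ = 0 := by
  rw [Q0, HilV_eq_of_sub_eq (k := 1) one_ne_zero fun t => by
    simpa only [Nat.cast_one, one_mul] using Xc_sub_Xc θ t]
  simp only [inner_smul_right, inner_dXc_dXc, sub_self, cos_zero, inner_Xc_self,
    intervalIntegral.integral_const, smul_eq_mul]
  field_simp
  ring

theorem Q0_dXc (θ : ℝ) : Q0 dXc θ = 0 := by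
  rw [Q0, HilV_eq_of_sub_eq (k := 1) one_ne_zero fun t => by
    simpa only [Nat.cast_one, one_mul] using dXc_sub_dXc θ t]
  simp [inner_dXc_Xc, inner_Xc_dXc_self]

/-- the explicit action of `Q₀` on the trigonometric basis. -/
theorem stmt14 :
    (∀ n : ℕ, 2 ≤ n → ∀ θ : ℝ,
      Q0 (fun φ => Real.cos (n * φ) • Xc φ) θ = 0 ∧
      Q0 (fun φ => Real.sin (n * φ) • Xc φ) θ = 0 ∧
      Q0 (fun φ => Real.cos (n * φ) • dXc φ) θ = -(1 / 4) * Real.sin (n * θ) ∧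
      Q0 (fun φ => Real.sin (n * φ) • dXc φ) θ = (1 / 4) * Real.cos (n * θ)) ∧
    (∀ θ : ℝ,
      Q0 (fun φ => Real.cos φ • Xc φ) θ = (1 / 8) * Real.cos θ ∧
      Q0 (fun φ => Real.sin φ • Xc φ) θ = (1 / 8) * Real.sin θ ∧
      Q0 (fun φ => Real.cos φ • dXc φ) θ = -(1 / 8) * Real.sin θ ∧
      Q0 (fun φ => Real.sin φ • dXc φ) θ = (1 / 8) * Real.cos θ) ∧
    (∀ θ : ℝ, Q0 Xc θ = 0 ∧ Q0 dXc θ = 0) :=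
  ⟨fun _ hn θ => ⟨Q0_cos_mul_smul_Xc hn θ, Q0_sin_mul_smul_Xc hn θ, Q0_cos_mul_smul_dXc hn θ,
      Q0_sin_mul_smul_dXc hn θ⟩,
    fun θ => ⟨Q0_cos_smul_Xc θ, Q0_sin_smul_Xc θ, Q0_cos_smul_dXc θ, Q0_sin_smul_dXc θ⟩,
    fun θ => ⟨Q0_Xc θ, Q0_dXc θ⟩⟩
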